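/- arXiv:1007.3236 — 2 statements merged into one kernel-verified Lean document; each statement's English description precedes it below -/
import Mathlib

section
/- lim_{n→∞} log(f_{n+2})/(n log 2) = log φ / log 2, where f_n is the Fibonacci sequence and φ = (1+√5)/2. Equivalently, the fractal dimension I of the language generated by the regular expression (00+1)^+, for which N_n(L) = 2(f_{n+2} − 1), equals log_2 φ. -/
/-!
Binet's formula gives `fib (n + 1) - ψ * fib n = φ ^ n` with `-1 < ψ < 0`, whence
`φ ^ n ≤ fib (n + 2) ≤ φ ^ (n + 1)`. Any sequence squeezed between two positive multiples of
`r ^ n` has `log (u n) / n → log r`, and `N_n(L) = 2 (fib (n + 2) - 1)` lies between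
`fib (n + 2)` and `2 fib (n + 2)`.
-/

open Real Filter Topology
open scoped goldenRatio

theorem tendsto_log_div_natCast_of_le_of_le {u : ℕ → ℝ} {r c C : ℝ} (hc : 0 < c) (hr : 0 < r)
    (hlow : ∀ᶠ n in atTop, c * r ^ n ≤ u n) (hup : ∀ᶠ n in atTop, u n ≤ C * r ^ n) :
    Tendsto (fun n : ℕ => log (u n) / n) atTop (𝓝 (log r)) := by
  obtain ⟨m, hm_low, hm_up⟩ := (hlow.and hup).exists
  have hC : 0 < C := hc.trans_le (le_of_mul_le_mul_right (hm_low.trans hm_up) (pow_pos hr m))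
  have log_mul_pow_div {a : ℝ} (ha : 0 < a) {n : ℕ} (hn : n ≠ 0) :
      log (a * r ^ n) / n = log a / n + log r := by
    rw [log_mul ha.ne' (pow_pos hr n).ne', log_pow]
    field_simp
  have limit_of {a : ℝ} : Tendsto (fun n : ℕ => log a / n + log r) atTop (𝓝 (log r)) := by
    simpa using (tendsto_const_div_atTop_nhds_zero_nat (log a)).add_const (log r)
  refine tendsto_of_tendsto_of_tendsto_of_le_of_le' (limit_of (a := c)) (limit_of (a := C)) ?_ ?_
  · filter_upwards [hlow, eventually_ne_atTop 0] with n hn hn0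
    rw [← log_mul_pow_div hc hn0]
    gcongr
  · filter_upwards [hlow, hup, eventually_ne_atTop 0] with n hn_low hn_up hn0
    rw [← log_mul_pow_div hC hn0]
    gcongr
    exact lt_of_lt_of_le (by positivity) hn_low

theorem goldenRatio_pow_le_fib_add_two (n : ℕ) : φ ^ n ≤ Nat.fib (n + 2) := by
  rw [← fib_succ_sub_goldenConj_mul_fib, Nat.fib_add_two, Nat.cast_add]
  nlinarith [neg_one_lt_goldenConj, (Nat.cast_nonneg (Nat.fib n) : (0 : ℝ) ≤ _)]

theorem fib_add_two_le_goldenRatio_pow_succ (n : ℕ) : (Nat.fib (n + 2) : ℝ) ≤ φ ^ (n + 1) := by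
  rw [← fib_succ_sub_goldenConj_mul_fib]
  nlinarith [goldenConj_neg, (Nat.cast_nonneg (Nat.fib (n + 1)) : (0 : ℝ) ≤ _)]

theorem tendsto_div_natCast_mul_const {f : ℕ → ℝ} {l : ℝ} (b : ℝ)
    (h : Tendsto (fun n : ℕ => f n / n) atTop (𝓝 l)) :
    Tendsto (fun n : ℕ => f n / (n * b)) atTop (𝓝 (l / b)) := by
  simpa only [div_div] using h.div_const b

/-- The fractal dimension I of the language generated by `(00+1)^+`:
`N_n(L) = 2 (fib (n+2) - 1)`, and both `log (fib (n+2)) / (n log 2)` and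
`log N_n(L) / (n log 2)` tend to `log φ / log 2` with `φ = (1+√5)/2`. -/
theorem stmt_13 :
    Filter.Tendsto
      (fun n : ℕ => Real.log (Nat.fib (n + 2)) / (n * Real.log 2))
      Filter.atTop (nhds (Real.log ((1 + Real.sqrt 5) / 2) / Real.log 2)) ∧
    Filter.Tendsto
      (fun n : ℕ => Real.log (2 * (Nat.fib (n + 2) - 1) : ℕ) / (n * Real.log 2))
      Filter.atTop (nhds (Real.log ((1 + Real.sqrt 5) / 2) / Real.log 2)) := by
  have fib_ge : ∀ n, 1 * φ ^ n ≤ Nat.fib (n + 2) := fun n =>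
    (one_mul _).trans_le (goldenRatio_pow_le_fib_add_two n)
  have fib_le : ∀ n, (Nat.fib (n + 2) : ℝ) ≤ φ * φ ^ n := fun n =>
    (fib_add_two_le_goldenRatio_pow_succ n).trans_eq (pow_succ' φ n)
  have fib_ge_two : ∀ᶠ n in atTop, 2 ≤ Nat.fib (n + 2) := by
    filter_upwards [eventually_ge_atTop 1] with n hn
    exact Nat.fib_mono (a := 3) (by omega)
  refine ⟨tendsto_div_natCast_mul_const _ ?_, tendsto_div_natCast_mul_const _ ?_⟩
  · refine tendsto_log_div_natCast_of_le_of_le one_pos goldenRatio_pos (C := φ) ?_ ?_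
    · exact .of_forall fib_ge
    · exact .of_forall fib_le
  · refine tendsto_log_div_natCast_of_le_of_le one_pos goldenRatio_pos (C := 2 * φ) ?_ ?_
    · filter_upwards [fib_ge_two] with n hn
      calc 1 * φ ^ n ≤ Nat.fib (n + 2) := fib_ge n
        _ ≤ ((2 * (Nat.fib (n + 2) - 1) : ℕ) : ℝ) := by exact_mod_cast (by omega)
    · filter_upwards with n
      calc ((2 * (Nat.fib (n + 2) - 1) : ℕ) : ℝ) ≤ 2 * Nat.fib (n + 2) := by
            exact_mod_cast (by omega)
        _ ≤ 2 * φ * φ ^ n := by rw [mul_assoc]; gcongr; exact fib_le n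
end

section
/- Let K ⊂ ℝ² be the attractor of the IFS with the 8 maps f_i(x,y) = (x/2, y/4) + t_i where t_i ∈ {(0,k/4) : k=0,1,2,3} ∪ {(1/2,k/4) : k=0,1,2,3} (so K = [0,1]²). Level n of the natural fractal structure consists of 8^n rectangles of dimensions 2^{−n} × 2^{−2n}, each of diameter √((1+2^{2n})/2^{4n}), and lim_{n→∞} log 8^n / (−log √((1+2^{2n})/2^{4n})) = 3. -/
/-!
Level `n` has `8^n` pieces of diameter `2^{-n} √(1 + 4^{-n})`, so the ratio is
`3 n log 2 / (n log 2 - log (1 + 4^{-n}) / 2)`, and the correction term tends to `0`.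
-/

open Filter Real Topology

theorem tendsto_const_mul_div_add_of_tendsto_atTop {α : Type*} {l : Filter α} {f g : α → ℝ}
    (k : ℝ) (hf : Tendsto f l atTop) (hg : Tendsto g l (𝓝 0)) :
    Tendsto (fun x => k * f x / (f x + g x)) l (𝓝 k) := by
  have hlim : Tendsto (fun x => k / (1 + g x / f x)) l (𝓝 (k / (1 + 0))) :=
    tendsto_const_nhds.div (tendsto_const_nhds.add (hg.div_atTop hf)) (by norm_num)
  rw [add_zero, div_one] at hlim
  refine hlim.congr' ?_
  filter_upwards [hf.eventually_gt_atTop 0] with x hx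
  field_simp

theorem sqrt_one_add_four_pow_div_sixteen_pow (n : ℕ) :
    √((1 + 2 ^ (2 * n)) / 2 ^ (4 * n)) = (1 / 2) ^ n * √(1 + (1 / 4) ^ n) := by
  have h : ((1 : ℝ) + 2 ^ (2 * n)) / 2 ^ (4 * n) = ((1 / 2) ^ n) ^ 2 * (1 + (1 / 4) ^ n) := by
    have h4 : (2 : ℝ) ^ (2 * n) = 4 ^ n := by rw [pow_mul]; norm_num
    have hhalf : ((1 / 2 : ℝ) ^ n) ^ 2 = (1 / 4) ^ n := by
      rw [← pow_mul, mul_comm, pow_mul]; norm_num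
    rw [show 4 * n = 2 * n * 2 by ring, pow_mul (2 : ℝ) (2 * n) 2, h4, hhalf, one_div_pow]
    field_simp
    ring
  rw [h, sqrt_mul (by positivity), sqrt_sq (by positivity)]

theorem neg_log_sqrt_one_add_four_pow_div_sixteen_pow (n : ℕ) :
    -log √((1 + 2 ^ (2 * n)) / 2 ^ (4 * n)) = n * log 2 + -(log (1 + (1 / 4) ^ n) / 2) := by
  rw [sqrt_one_add_four_pow_div_sixteen_pow, log_mul (by positivity) (by positivity), log_pow,
    log_sqrt (by positivity), one_div, log_inv]
  ring

theorem log_eight_pow (n : ℕ) : log ((8 : ℝ) ^ n) = 3 * (n * log 2) := by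
  rw [show (8 : ℝ) = 2 ^ 3 by norm_num, ← pow_mul, log_pow]
  push_cast
  ring

theorem tendsto_log_one_add_quarter_pow :
    Tendsto (fun n : ℕ => log (1 + (1 / 4 : ℝ) ^ n)) atTop (𝓝 0) := by
  have h : Tendsto (fun n : ℕ => 1 + (1 / 4 : ℝ) ^ n) atTop (𝓝 (1 + 0)) :=
    tendsto_const_nhds.add (tendsto_pow_atTop_nhds_zero_of_lt_one (by norm_num) (by norm_num))
  rw [add_zero] at h
  simpa using h.log one_ne_zero

/-- Fractal dimension II of the unit square with the natural fractal structure
coming from the IFS of 8 maps `(x,y) ↦ (x/2, y/4) + t_i`: level `n` consists of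
`8^n` rectangles of size `2^{-n} × 2^{-2n}`, each of diameter
`√((1 + 2^{2n}) / 2^{4n})`, and `lim log 8^n / (-log δ_n) = 3`. -/
theorem stmt_17 :
    Filter.Tendsto
      (fun n : ℕ => Real.log ((8 : ℝ) ^ n) /
        (-Real.log (Real.sqrt ((1 + 2 ^ (2 * n)) / 2 ^ (4 * n)))))
      Filter.atTop (nhds 3) := by
  have hlevel : Tendsto (fun n : ℕ => (n : ℝ) * log 2) atTop atTop :=
    tendsto_natCast_atTop_atTop.atTop_mul_const (log_pos one_lt_two)
  have hcorrection : Tendsto (fun n : ℕ => -(log (1 + (1 / 4 : ℝ) ^ n) / 2)) atTop (𝓝 0) := by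
    simpa using (tendsto_log_one_add_quarter_pow.div_const 2).neg
  simpa only [log_eight_pow, neg_log_sqrt_one_add_four_pow_div_sixteen_pow] using
    tendsto_const_mul_div_add_of_tendsto_atTop 3 hlevel hcorrection
end
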